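/- arXiv:1910.12560 — 2 statements merged into one kernel-verified Lean document; each statement's English description precedes it below -/
import Mathlib

section
/- The specialized q-Appell series f(x₁,x₂) = Σ_{m,n≥0} (a;q)_{m+n}(b;q)_m(b';q)_n / ((bb';q)_{m+n}(q;q)_m(q;q)_n) x₁^m x₂^n satisfies the second-order q-difference equation (aq x₁ − b')(aq x₂ − b) f(q²x₁, q²x₂) + q(x₁−1)(x₂−1) f(x₁,x₂) − (aq(q+1)x₁x₂ − q(a+b)x₁ − q(a+b')x₂ + bb' + q) f(qx₁, qx₂) = 0, as an identity of formal power series in x₁, x₂. -/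
/-!
With `c = bb'` the coefficients `F m n` satisfy, besides the two ratio recurrences in `m` and
in `n`, the three-term relation
`(1 - q^{m+1}) F(m+1,n) + b q^m (1 - q^{n+1}) F(m,n+1) = (1 - a q^{m+n}) F(m,n)`,
because `(1 - b q^m) + b q^m (1 - b' q^n) = 1 - bb' q^{m+n}`. Extended by zero, all three
relations hold at every pair of integers (on the edge `m = -1` or `n = -1` the factor `1 - q^0`
vanishes), and the second-order equation at `(m,n)` is an explicit linear combination of them,
so no boundary cases have to be treated separately.
-/

/-- The q-Pochhammer symbol `(z;q)_n = ∏_{j=0}^{n-1} (1 - z q^j)`. -/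
noncomputable def qPoch (q z : ℂ) (n : ℕ) : ℂ := ∏ j ∈ Finset.range n, (1 - z * q ^ j)

lemma qPoch_succ (q z : ℂ) (n : ℕ) : qPoch q z (n + 1) = qPoch q z n * (1 - z * q ^ n) :=
  Finset.prod_range_succ _ _

lemma qPoch_ne_zero {q z : ℂ} (h : ∀ j : ℕ, z * q ^ j ≠ 1) (n : ℕ) : qPoch q z n ≠ 0 :=
  Finset.prod_ne_zero_iff.mpr fun j _ => sub_ne_zero.mpr (h j).symm

lemma pow_succ_ne_one_of_norm_lt_one {𝕜 : Type*} [NormedDivisionRing 𝕜] {q : 𝕜} (hq : ‖q‖ < 1) (j : ℕ) : q ^ (j + 1) ≠ 1 := by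
  intro h
  have := pow_lt_one₀ (norm_nonneg q) hq j.succ_ne_zero
  rw [← norm_pow, h, norm_one] at this
  exact this.false

lemma qPoch_self_ne_zero {q : ℂ} (hq : ‖q‖ < 1) (n : ℕ) : qPoch q q n ≠ 0 :=
  qPoch_ne_zero (fun j => pow_succ' q j ▸ pow_succ_ne_one_of_norm_lt_one hq j) n

noncomputable def qAppellCoeff (q a b b' : ℂ) (m n : ℕ) : ℂ :=
  qPoch q a (m + n) * qPoch q b m * qPoch q b' n
    / (qPoch q (b * b') (m + n) * qPoch q q m * qPoch q q n)

section Contiguous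

variable {q a b b' : ℂ}

lemma qAppellCoeff_succ_left (hq : ‖q‖ < 1) (hbb' : ∀ n : ℕ, b * b' * q ^ n ≠ 1) (m n : ℕ) :
    (1 - b * b' * q ^ (m + n)) * (1 - q ^ (m + 1)) * qAppellCoeff q a b b' (m + 1) n
      = (1 - a * q ^ (m + n)) * (1 - b * q ^ m) * qAppellCoeff q a b b' m n := by
  have hm : 1 - q ^ (m + 1) ≠ 0 := sub_ne_zero.mpr (pow_succ_ne_one_of_norm_lt_one hq m).symm
  have hs : 1 - b * b' * q ^ (m + n) ≠ 0 := sub_ne_zero.mpr (hbb' (m + n)).symm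
  have hC := qPoch_ne_zero hbb' (m + n)
  have hQm := qPoch_self_ne_zero hq m
  have hQn := qPoch_self_ne_zero hq n
  unfold qAppellCoeff
  rw [Nat.add_right_comm, qPoch_succ, qPoch_succ, qPoch_succ, qPoch_succ q q, ← pow_succ']
  field_simp

lemma qAppellCoeff_succ_right (hq : ‖q‖ < 1) (hbb' : ∀ n : ℕ, b * b' * q ^ n ≠ 1) (m n : ℕ) :
    (1 - b * b' * q ^ (m + n)) * (1 - q ^ (n + 1)) * qAppellCoeff q a b b' m (n + 1)
      = (1 - a * q ^ (m + n)) * (1 - b' * q ^ n) * qAppellCoeff q a b b' m n := by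
  have hn : 1 - q ^ (n + 1) ≠ 0 := sub_ne_zero.mpr (pow_succ_ne_one_of_norm_lt_one hq n).symm
  have hs : 1 - b * b' * q ^ (m + n) ≠ 0 := sub_ne_zero.mpr (hbb' (m + n)).symm
  have hC := qPoch_ne_zero hbb' (m + n)
  have hQm := qPoch_self_ne_zero hq m
  have hQn := qPoch_self_ne_zero hq n
  unfold qAppellCoeff
  rw [← Nat.add_assoc, qPoch_succ, qPoch_succ, qPoch_succ, qPoch_succ q q, ← pow_succ']
  field_simp

lemma qAppellCoeff_contiguous (hq : ‖q‖ < 1) (hbb' : ∀ n : ℕ, b * b' * q ^ n ≠ 1) (m n : ℕ) :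
    (1 - q ^ (m + 1)) * qAppellCoeff q a b b' (m + 1) n
      + b * q ^ m * (1 - q ^ (n + 1)) * qAppellCoeff q a b b' m (n + 1)
      = (1 - a * q ^ (m + n)) * qAppellCoeff q a b b' m n := by
  refine mul_left_cancel₀ (sub_ne_zero.mpr (hbb' (m + n)).symm) ?_
  linear_combination qAppellCoeff_succ_left (a := a) hq hbb' m n
    + b * q ^ m * qAppellCoeff_succ_right (a := a) hq hbb' m n

variable {F : ℤ → ℤ → ℂ}

lemma succ_left_of_eq_qAppellCoeff (hq : ‖q‖ < 1) (hbb' : ∀ n : ℕ, b * b' * q ^ n ≠ 1)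
    (hF0 : ∀ m n : ℤ, m < 0 ∨ n < 0 → F m n = 0)
    (hF : ∀ m n : ℕ, F m n = qAppellCoeff q a b b' m n) (m n : ℤ) :
    (1 - b * b' * q ^ (m + n)) * (1 - q ^ (m + 1)) * F (m + 1) n
      = (1 - a * q ^ (m + n)) * (1 - b * q ^ m) * F m n := by
  rcases lt_or_ge n 0 with hn | hn
  · simp [hF0 _ n (Or.inr hn)]
  rcases lt_or_ge m 0 with hm | hm
  · rcases (by omega : m + 1 < 0 ∨ m + 1 = 0) with hm' | hm'
    · simp [hF0 _ n (Or.inl hm), hF0 _ n (Or.inl hm')]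
    · simp [hF0 _ n (Or.inl hm), hm']
  lift m to ℕ using hm
  lift n to ℕ using hn
  have h := qAppellCoeff_succ_left (a := a) hq hbb' m n
  rw [← hF, ← hF] at h
  exact_mod_cast h

lemma succ_right_of_eq_qAppellCoeff (hq : ‖q‖ < 1) (hbb' : ∀ n : ℕ, b * b' * q ^ n ≠ 1)
    (hF0 : ∀ m n : ℤ, m < 0 ∨ n < 0 → F m n = 0)
    (hF : ∀ m n : ℕ, F m n = qAppellCoeff q a b b' m n) (m n : ℤ) :
    (1 - b * b' * q ^ (m + n)) * (1 - q ^ (n + 1)) * F m (n + 1)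
      = (1 - a * q ^ (m + n)) * (1 - b' * q ^ n) * F m n := by
  rcases lt_or_ge m 0 with hm | hm
  · simp [hF0 m _ (Or.inl hm)]
  rcases lt_or_ge n 0 with hn | hn
  · rcases (by omega : n + 1 < 0 ∨ n + 1 = 0) with hn' | hn'
    · simp [hF0 m _ (Or.inr hn), hF0 m _ (Or.inr hn')]
    · simp [hF0 m _ (Or.inr hn), hn']
  lift m to ℕ using hm
  lift n to ℕ using hn
  have h := qAppellCoeff_succ_right (a := a) hq hbb' m n
  rw [← hF, ← hF] at h
  exact_mod_cast h

lemma contiguous_of_eq_qAppellCoeff (hq : ‖q‖ < 1) (hbb' : ∀ n : ℕ, b * b' * q ^ n ≠ 1)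
    (hF0 : ∀ m n : ℤ, m < 0 ∨ n < 0 → F m n = 0)
    (hF : ∀ m n : ℕ, F m n = qAppellCoeff q a b b' m n) (m n : ℤ) :
    (1 - q ^ (m + 1)) * F (m + 1) n + b * q ^ m * (1 - q ^ (n + 1)) * F m (n + 1)
      = (1 - a * q ^ (m + n)) * F m n := by
  rcases (by omega : m < -1 ∨ n < -1 ∨ m = -1 ∨ n = -1 ∨ (0 ≤ m ∧ 0 ≤ n))
    with h | h | rfl | rfl | ⟨hm, hn⟩
  · simp [hF0 m _ (Or.inl (by omega)), hF0 (m + 1) _ (Or.inl (by omega))]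
  · simp [hF0 _ n (Or.inr (by omega)), hF0 _ (n + 1) (Or.inr (by omega))]
  · simp [hF0 (-1) _ (Or.inl (by norm_num))]
  · simp [hF0 _ (-1) (Or.inr (by norm_num))]
  lift m to ℕ using hm
  lift n to ℕ using hn
  have h := qAppellCoeff_contiguous (a := a) hq hbb' m n
  rw [← hF, ← hF, ← hF] at h
  exact_mod_cast h

end Contiguous

/-- The specialized q-Appell series (with `c = bb'`) satisfies the second-order
q-difference equation
`(aqx₁-b')(aqx₂-b) f(q²x₁,q²x₂) + q(x₁-1)(x₂-1) f(x₁,x₂)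
  - (aq(q+1)x₁x₂ - q(a+b)x₁ - q(a+b')x₂ + bb' + q) f(qx₁,qx₂) = 0`,
stated coefficientwise (as an identity of formal power series in `x₁, x₂`):
`F m n` denotes the coefficient of `x₁^m x₂^n`, extended by zero to negative indices. -/
theorem qAppell_specialized_second_order (q a b b' : ℂ)
    (hq0 : 0 < ‖q‖) (hq1 : ‖q‖ < 1)
    (hbb' : ∀ n : ℕ, b * b' * q ^ n ≠ 1)
    (F : ℤ → ℤ → ℂ)
    (hF0 : ∀ m n : ℤ, m < 0 ∨ n < 0 → F m n = 0)
    (hF : ∀ m n : ℕ, F m n =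
      qPoch q a (m + n) * qPoch q b m * qPoch q b' n
        / (qPoch q (b * b') (m + n) * qPoch q q m * qPoch q q n)) :
    ∀ m n : ℤ,
      (a ^ 2 * q ^ 2 * q ^ (2 * (m - 1) + 2 * (n - 1)) * F (m - 1) (n - 1)
        - a * b * q * q ^ (2 * (m - 1) + 2 * n) * F (m - 1) n
        - a * b' * q * q ^ (2 * m + 2 * (n - 1)) * F m (n - 1)
        + b * b' * q ^ (2 * m + 2 * n) * F m n)
      + q * (F (m - 1) (n - 1) - F (m - 1) n - F m (n - 1) + F m n)
      - (a * q * (q + 1) * q ^ ((m - 1) + (n - 1)) * F (m - 1) (n - 1)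
        - q * (a + b) * q ^ ((m - 1) + n) * F (m - 1) n
        - q * (a + b') * q ^ (m + (n - 1)) * F m (n - 1)
        + (b * b' + q) * q ^ (m + n) * F m n) = 0 := by
  have hq : q ≠ 0 := norm_pos_iff.mp hq0
  intro m n
  have hL := succ_left_of_eq_qAppellCoeff hq1 hbb' hF0 hF (m - 1) n
  have hR := succ_right_of_eq_qAppellCoeff hq1 hbb' hF0 hF m (n - 1)
  have hS := contiguous_of_eq_qAppellCoeff hq1 hbb' hF0 hF (m - 1) (n - 1)
  obtain ⟨i, rfl⟩ : ∃ i, m = i + 1 := ⟨m - 1, by ring⟩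
  obtain ⟨j, rfl⟩ : ∃ j, n = j + 1 := ⟨n - 1, by ring⟩
  simp only [add_sub_cancel_right, mul_add, zpow_add₀ hq, zpow_mul', zpow_ofNat]
    at hL hR hS ⊢
  linear_combination q * hL + q ^ 2 * q ^ i * hR - q * (1 - a * q * q ^ i * q ^ j) * hS
end

section
/- If a function f(x₁,x₂) satisfies (aq x₁ − b')(aq x₂ − b) f(q²x₁, q²x₂) + q(x₁−1)(x₂−1) f(x₁,x₂) − (aq(q+1)x₁x₂ − q(a+b)x₁ − q(a+b')x₂ + bb' + q) f(qx₁, qx₂) = 0, where a = q^{λ+α₁}, b = q^{λ+α₁+l₂−h₂}, b' = q^{λ+α₁+l₁−h₁} and λ = (h₁+h₂−l₁−l₂−α₁−α₂+1)/2, then the function g(x) = x^{−α₁} f(q^{l₁+1/2} t₁/x, q^{l₂+1/2} t₂/x) satisfies the variant of the q-hypergeometric equation of degree two: (x−q^{h₁+1/2}t₁)(x−q^{h₂+1/2}t₂)g(x/q) + q^{α₁+α₂}(x−q^{l₁−1/2}t₁)(x−q^{l₂−1/2}t₂)g(qx) − [(q^{α₁}+q^{α₂})x² + Ex + p(q^{1/2}+q^{−1/2})t₁t₂]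 g(x) = 0, with p = q^{(h₁+h₂+l₁+l₂+α₁+α₂)/2} and E = −p{(q^{−h₂}+q^{−l₂})t₁ + (q^{−h₁}+q^{−l₁})t₂}. -/
/-- Real power `q^e` of a positive real base, viewed as a complex number. -/
noncomputable def qr (q e : ℝ) : ℂ := ((q ^ e : ℝ) : ℂ)

lemma qr_add {q : ℝ} (hq0 : 0 < q) (x y : ℝ) : qr q (x + y) = qr q x * qr q y := by
  simp [qr, Real.rpow_add hq0]

lemma qr_one {q : ℝ} (hq0 : 0 < q) : qr q 1 = (q : ℂ) := by simp [qr]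

lemma ofReal_pos_mul_cpow {r : ℝ} (hr : 0 < r) {z : ℂ} (hz : z ≠ 0) (w : ℂ) :
    ((r : ℂ) * z) ^ w = (r : ℂ) ^ w * z ^ w := by
  have hr' : (r : ℂ) ≠ 0 := Complex.ofReal_ne_zero.mpr hr.ne'
  rw [Complex.cpow_def_of_ne_zero (mul_ne_zero hr' hz), Complex.log_ofReal_mul hr hz,
    add_mul, Complex.exp_add, Complex.cpow_def_of_ne_zero hr', Complex.cpow_def_of_ne_zero hz,
    Complex.ofReal_log hr.le]

/-- If `f(x₁,x₂)` satisfies the specialized q-Appell equation with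
`a = q^{λ+α₁}`, `b = q^{λ+α₁+l₂-h₂}`, `b' = q^{λ+α₁+l₁-h₁}`,
`λ = (h₁+h₂-l₁-l₂-α₁-α₂+1)/2`, then
`g(x) = x^{-α₁} f(q^{l₁+1/2}t₁/x, q^{l₂+1/2}t₂/x)` satisfies the variant of the
q-hypergeometric equation of degree two. -/
theorem qAppell_to_variant_degree_two (q : ℝ) (hq0 : 0 < q) (hq1 : q ≠ 1)
    (h₁ h₂ l₁ l₂ α₁ α₂ : ℝ) (t₁ t₂ : ℂ) (ht₁ : t₁ ≠ 0) (ht₂ : t₂ ≠ 0)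
    (f : ℂ → ℂ → ℂ)
    (lam : ℝ) (hlam : lam = (h₁ + h₂ - l₁ - l₂ - α₁ - α₂ + 1) / 2)
    (a b b' : ℂ) (ha : a = qr q (lam + α₁)) (hb : b = qr q (lam + α₁ + l₂ - h₂))
    (hb' : b' = qr q (lam + α₁ + l₁ - h₁))
    (hf : ∀ x₁ x₂ : ℂ,
      (a * q * x₁ - b') * (a * q * x₂ - b) * f ((q : ℂ) ^ 2 * x₁) ((q : ℂ) ^ 2 * x₂)
        + q * (x₁ - 1) * (x₂ - 1) * f x₁ x₂
        - (a * q * (q + 1) * x₁ * x₂ - q * (a + b) * x₁ - q * (a + b') * x₂ + b * b' + q)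
            * f ((q : ℂ) * x₁) ((q : ℂ) * x₂) = 0)
    (g : ℂ → ℂ)
    (hg : ∀ x : ℂ, g x = x ^ (-(α₁ : ℂ))
      * f (qr q (l₁ + 1/2) * t₁ / x) (qr q (l₂ + 1/2) * t₂ / x))
    (p E : ℂ) (hp : p = qr q ((h₁ + h₂ + l₁ + l₂ + α₁ + α₂) / 2))
    (hE : E = -p * ((qr q (-h₂) + qr q (-l₂)) * t₁ + (qr q (-h₁) + qr q (-l₁)) * t₂)) :
    ∀ x : ℂ, x ≠ 0 →
      (x - qr q (h₁ + 1/2) * t₁) * (x - qr q (h₂ + 1/2) * t₂) * g (x / q)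
        + qr q (α₁ + α₂) * (x - qr q (l₁ - 1/2) * t₁) * (x - qr q (l₂ - 1/2) * t₂)
            * g ((q : ℂ) * x)
        - ((qr q α₁ + qr q α₂) * x ^ 2 + E * x
            + p * (qr q (1/2) + qr q (-1/2)) * t₁ * t₂) * g x = 0 := by
  intro x hx
  have hqC : (q : ℂ) ≠ 0 := Complex.ofReal_ne_zero.mpr hq0.ne'
  have hXq : (x / (q : ℂ)) ^ (-(α₁ : ℂ)) = qr q α₁ * x ^ (-(α₁ : ℂ)) := by
    have h : x / (q : ℂ) = ((q⁻¹ : ℝ) : ℂ) * x := by push_cast; ring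
    rw [h, ofReal_pos_mul_cpow (inv_pos.mpr hq0) hx]
    congr 1
    rw [show (-(α₁ : ℂ)) = ((-α₁ : ℝ) : ℂ) by push_cast; ring,
      ← Complex.ofReal_cpow (inv_nonneg.mpr hq0.le)]
    simp [qr, Real.rpow_neg hq0.le, Real.inv_rpow hq0.le]
  have hQx : ((q : ℂ) * x) ^ (-(α₁ : ℂ)) = qr q (-α₁) * x ^ (-(α₁ : ℂ)) := by
    rw [ofReal_pos_mul_cpow hq0 hx]
    congr 1
    rw [show (-(α₁ : ℂ)) = ((-α₁ : ℝ) : ℂ) by push_cast; ring,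
      ← Complex.ofReal_cpow hq0.le]
    rfl
  rw [hg (x / (q : ℂ)), hg ((q : ℂ) * x), hg x, hXq, hQx, qr_add hq0 α₁ α₂, hE]
  set u := qr q (l₁ + 1/2) * t₁ / ((q : ℂ) * x) with hu_def
  set v := qr q (l₂ + 1/2) * t₂ / ((q : ℂ) * x) with hv_def
  have hA2 : qr q (l₁ + 1/2) * t₁ / (x / (q : ℂ)) = (q : ℂ) ^ 2 * u := by
    rw [hu_def]; field_simp
  have hB2 : qr q (l₂ + 1/2) * t₂ / (x / (q : ℂ)) = (q : ℂ) ^ 2 * v := by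
    rw [hv_def]; field_simp
  have hA1 : qr q (l₁ + 1/2) * t₁ / x = (q : ℂ) * u := by
    rw [hu_def]; field_simp
  have hB1 : qr q (l₂ + 1/2) * t₂ / x = (q : ℂ) * v := by
    rw [hv_def]; field_simp
  rw [hA2, hB2, hA1, hB1]
  have hu : u * ((q : ℂ) * x) = qr q (l₁ + 1/2) * t₁ := by
    rw [hu_def]; field_simp
  have hv : v * ((q : ℂ) * x) = qr q (l₂ + 1/2) * t₂ := by
    rw [hv_def]; field_simp
  set F₂ := f ((q : ℂ) ^ 2 * u) ((q : ℂ) ^ 2 * v) with hF₂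
  set F₁ := f ((q : ℂ) * u) ((q : ℂ) * v) with hF₁
  set F₀ := f u v with hF₀
  have key := hf u v
  have C1 : qr q α₁ * qr q (h₁ + 1/2)
      = qr q (α₂ - 2) * (q : ℂ) * (a * b) * qr q (l₁ + 1/2) := by
    simp only [ha, hb, ← qr_one hq0, ← qr_add hq0]; congr 1; rw [hlam]; ring
  have C2 : qr q α₁ * qr q (h₂ + 1/2)
      = qr q (α₂ - 2) * (q : ℂ) * (a * b') * qr q (l₂ + 1/2) := by
    simp only [ha, hb', ← qr_one hq0, ← qr_add hq0]; congr 1; rw [hlam]; ring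
  have C3 : qr q α₁ = qr q (α₂ - 2) * (q : ℂ) * (b * b') := by
    simp only [hb, hb', ← qr_one hq0, ← qr_add hq0]; congr 1; rw [hlam]; ring
  have C3' : qr q α₁ * qr q (h₁ + 1/2) * qr q (h₂ + 1/2)
      = qr q (α₂ - 2) * (q : ℂ) * (a * a) * qr q (l₁ + 1/2) * qr q (l₂ + 1/2) := by
    simp only [ha, ← qr_one hq0, ← qr_add hq0]; congr 1; rw [hlam]; ring
  have C4 : qr q α₁ * qr q α₂ * qr q (-α₁) = qr q (α₂ - 2) * (q : ℂ) * (q : ℂ) := by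
    simp only [← qr_one hq0, ← qr_add hq0]; congr 1; ring
  have C5 : qr q α₁ * qr q α₂ * qr q (-α₁) * qr q (l₁ - 1/2)
      = qr q (α₂ - 2) * (q : ℂ) * qr q (l₁ + 1/2) := by
    simp only [← qr_one hq0, ← qr_add hq0]; congr 1; ring
  have C6 : qr q α₁ * qr q α₂ * qr q (-α₁) * qr q (l₂ - 1/2)
      = qr q (α₂ - 2) * (q : ℂ) * qr q (l₂ + 1/2) := by
    simp only [← qr_one hq0, ← qr_add hq0]; congr 1; ring
  have C7 : qr q α₁ * qr q α₂ * qr q (-α₁) * qr q (l₁ - 1/2) * qr q (l₂ - 1/2)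
      = qr q (α₂ - 2) * qr q (l₁ + 1/2) * qr q (l₂ + 1/2) := by
    simp only [← qr_add hq0]; congr 1; ring
  have C15 : qr q α₂ = qr q (α₂ - 2) * (q : ℂ) * (q : ℂ) := by
    simp only [← qr_one hq0, ← qr_add hq0]; congr 1; ring
  have C9 : p * qr q (-l₂) = qr q (α₂ - 2) * (q : ℂ) * a * qr q (l₁ + 1/2) := by
    simp only [hp, ha, ← qr_one hq0, ← qr_add hq0]; congr 1; rw [hlam]; ring
  have C10 : p * qr q (-h₂) = qr q (α₂ - 2) * (q : ℂ) * b * qr q (l₁ + 1/2) := by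
    simp only [hp, hb, ← qr_one hq0, ← qr_add hq0]; congr 1; rw [hlam]; ring
  have C11 : p * qr q (-l₁) = qr q (α₂ - 2) * (q : ℂ) * a * qr q (l₂ + 1/2) := by
    simp only [hp, ha, ← qr_one hq0, ← qr_add hq0]; congr 1; rw [hlam]; ring
  have C12 : p * qr q (-h₁) = qr q (α₂ - 2) * (q : ℂ) * b' * qr q (l₂ + 1/2) := by
    simp only [hp, hb', ← qr_one hq0, ← qr_add hq0]; congr 1; rw [hlam]; ring
  have C13 : p * qr q (1/2)
      = qr q (α₂ - 2) * (q : ℂ) * a * qr q (l₁ + 1/2) * qr q (l₂ + 1/2) := by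
    simp only [hp, ha, ← qr_one hq0, ← qr_add hq0]; congr 1; rw [hlam]; ring
  have C14 : p * qr q (-1/2)
      = qr q (α₂ - 2) * a * qr q (l₁ + 1/2) * qr q (l₂ + 1/2) := by
    simp only [hp, ha, ← qr_add hq0]; congr 1; rw [hlam]; ring
  linear_combination
    (x ^ (-(α₁ : ℂ)) * qr q (α₂ - 2) * (q : ℂ) * x ^ 2) * key
    + (x ^ (-(α₁ : ℂ)) * qr q (α₂ - 2)
        * (-(q : ℂ) * a * x * (a * (q : ℂ) * v - b) * F₂
          + (q : ℂ) * a * a * (v * ((q : ℂ) * x) - qr q (l₂ + 1/2) * t₂) * F₂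
          + F₀ * (-(q : ℂ) * x * (v - 1) + (v * ((q : ℂ) * x) - qr q (l₂ + 1/2) * t₂))
          - F₁ * (-a * ((q : ℂ) + 1) * v * (q : ℂ) * x
              + a * ((q : ℂ) + 1) * (v * ((q : ℂ) * x) - qr q (l₂ + 1/2) * t₂)
              + (q : ℂ) * (a + b) * x))) * hu
    + (x ^ (-(α₁ : ℂ)) * qr q (α₂ - 2)
        * (-(q : ℂ) * a * x * (a * (q : ℂ) * u - b') * F₂
          - (q : ℂ) * x * (u - 1) * F₀
          - F₁ * (-a * ((q : ℂ) + 1) * u * (q : ℂ) * x + (q : ℂ) * (a + b') * x))) * hv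
    + (x ^ (-(α₁ : ℂ)) * x ^ 2 * (F₂ - F₁)) * C3
    - (x ^ (-(α₁ : ℂ)) * x * t₁ * F₂) * C1 - (x ^ (-(α₁ : ℂ)) * x * t₂ * F₂) * C2
    + (x ^ (-(α₁ : ℂ)) * t₁ * t₂ * F₂) * C3'
    + (x ^ (-(α₁ : ℂ)) * x ^ 2 * F₀) * C4
    - (x ^ (-(α₁ : ℂ)) * x * t₁ * F₀) * C5 - (x ^ (-(α₁ : ℂ)) * x * t₂ * F₀) * C6
    + (x ^ (-(α₁ : ℂ)) * t₁ * t₂ * F₀) * C7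
    - (x ^ (-(α₁ : ℂ)) * x ^ 2 * F₁) * C15
    + (x ^ (-(α₁ : ℂ)) * x * t₁ * F₁) * (C9 + C10)
    + (x ^ (-(α₁ : ℂ)) * x * t₂ * F₁) * (C11 + C12)
    - (x ^ (-(α₁ : ℂ)) * t₁ * t₂ * F₁) * (C13 + C14)
end
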